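/- arXiv:2601.18984 — 2 statements merged into one kernel-verified Lean document; each statement's English description precedes it below -/
import Mathlib

section
/- For any η > 0, H ≥ 1 a positive integer, and c ≥ 1 a positive integer, the sum ∑_{i=0}^{c-1} (1 + exp(-η·i))^H is at least (2^{H+1}/(η·H)) · (1 - exp(-η·H·c/2)). -/
theorem stmt1 (η : ℝ) (hη : 0 < η) (H c : ℕ) (hH : 1 ≤ H) (hc : 1 ≤ c) :
    ∑ i ∈ Finset.range c, (1 + Real.exp (-(η * i))) ^ H ≥
      2 ^ (H + 1) / (η * H) * (1 - Real.exp (-(η * H * c) / 2)) := by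
  have hHpos : (0:ℝ) < H := by exact_mod_cast hH
  set r : ℝ := Real.exp (-(η * H) / 2) with hr
  have hr0 : 0 < r := Real.exp_pos _
  have hr1 : r < 1 := by
    rw [hr, Real.exp_lt_one_iff]
    nlinarith
  have hrc : r ^ c = Real.exp (-(η * H * c) / 2) := by
    rw [hr, ← Real.exp_nat_mul]
    ring_nf
  have hrcle : r ^ c < 1 := pow_lt_one₀ (le_of_lt hr0) hr1 (by omega)
  -- termwise bound
  have step1 : ∀ i ∈ Finset.range c, (2:ℝ)^H * r ^ i ≤ (1 + Real.exp (-(η * i))) ^ H := by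
    intro i _
    have h1 : Real.exp (-(η*i)/2) ^ 2 = Real.exp (-(η*i)) := by
      rw [← Real.exp_nat_mul]; ring_nf
    have h2 : 2 * Real.exp (-(η*i)/2) ≤ 1 + Real.exp (-(η*i)) := by
      nlinarith [sq_nonneg (1 - Real.exp (-(η*i)/2))]
    have h3 : (2 * Real.exp (-(η*i)/2)) ^ H ≤ (1 + Real.exp (-(η*i))) ^ H :=
      pow_le_pow_left₀ (by positivity) h2 H
    calc (2:ℝ)^H * r^i = (2 * Real.exp (-(η*i)/2)) ^ H := by
          rw [mul_pow, hr, ← Real.exp_nat_mul, ← Real.exp_nat_mul]; ring_nf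
      _ ≤ _ := h3
  have hsum : (2:ℝ)^H * ∑ i ∈ Finset.range c, r ^ i ≤
      ∑ i ∈ Finset.range c, (1 + Real.exp (-(η * i))) ^ H := by
    rw [Finset.mul_sum]; exact Finset.sum_le_sum step1
  have hgeom : ∑ i ∈ Finset.range c, r ^ i = (1 - r^c) / (1 - r) := by
    rw [geom_sum_eq (ne_of_lt hr1)]
    rw [div_eq_div_iff (by linarith) (by linarith)]
    ring
  -- 1 - r ≤ ηH/2
  have hbound : 1 - r ≤ η * H / 2 := by
    have := Real.add_one_le_exp (-(η * H) / 2)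
    rw [← hr] at this
    linarith
  have hdiv : (1 - r^c) / (η * H / 2) ≤ (1 - r^c) / (1 - r) := by
    apply div_le_div_of_nonneg_left (by linarith) (by linarith) hbound
  have key : (2:ℝ)^H * ((1 - r^c) / (η * H / 2)) ≤
      ∑ i ∈ Finset.range c, (1 + Real.exp (-(η * i))) ^ H := by
    calc (2:ℝ)^H * ((1 - r^c) / (η * H / 2)) ≤ (2:ℝ)^H * ((1 - r^c) / (1 - r)) := by
          apply mul_le_mul_of_nonneg_left hdiv (by positivity)
      _ = (2:ℝ)^H * ∑ i ∈ Finset.range c, r ^ i := by rw [hgeom]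
      _ ≤ _ := hsum
  have heq : (2:ℝ) ^ (H + 1) / (η * H) * (1 - Real.exp (-(η * H * c) / 2)) =
      (2:ℝ)^H * ((1 - r^c) / (η * H / 2)) := by
    rw [← hrc, pow_succ]
    field_simp
  rw [ge_iff_le, heq]
  exact key
end

section
/- If responses are i.i.d. correct with probability p, and out of n samples the number of correct ones is c ~ Binomial(n, p), then E[1 - C(n-c,K)/C(n,K)] = 1 - (1-p)^K for any 1 ≤ K ≤ n. -/
lemma key_choose (n K c : ℕ) (hKn : K ≤ n) (hc : c ≤ n) :
    n.choose c * (n - c).choose K = n.choose K * (n - K).choose c := by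
  by_cases h : c + K ≤ n
  · have h1 := Nat.choose_mul (n := n) (Nat.le_add_right c K)
    have h2 := Nat.choose_mul (n := n) (Nat.le_add_left K c)
    simp only [Nat.add_sub_cancel, Nat.add_sub_cancel_left] at h1 h2
    rw [Nat.choose_symm_add] at h1
    rw [← h1]; exact h2
  · have e1 : (n - c).choose K = 0 := Nat.choose_eq_zero_of_lt (by omega)
    have e2 : (n - K).choose c = 0 := Nat.choose_eq_zero_of_lt (by omega)
    rw [e1, e2, Nat.mul_zero, Nat.mul_zero]

theorem stmt14 (n K : ℕ) (hK1 : 1 ≤ K) (hKn : K ≤ n) (p : ℝ) (hp0 : 0 ≤ p)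
    (hp1 : p ≤ 1) :
    ∑ c ∈ Finset.range (n + 1),
        (n.choose c : ℝ) * p ^ c * (1 - p) ^ (n - c) *
          (1 - ((n - c).choose K : ℝ) / (n.choose K)) =
      1 - (1 - p) ^ K := by
  have hnK : (n.choose K : ℝ) ≠ 0 := by
    exact_mod_cast (Nat.choose_pos hKn).ne'
  have hsum1 : ∑ c ∈ Finset.range (n + 1),
      (n.choose c : ℝ) * p ^ c * (1 - p) ^ (n - c) = 1 := by
    have h := add_pow p (1 - p) n
    simp only [add_sub_cancel, one_pow] at h
    rw [show ∑ c ∈ Finset.range (n + 1), (n.choose c : ℝ) * p ^ c * (1 - p) ^ (n - c)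
        = ∑ c ∈ Finset.range (n + 1), p ^ c * (1 - p) ^ (n - c) * (n.choose c : ℝ) from
      Finset.sum_congr rfl (fun c _ => by ring), ← h]
  have hsum2 : ∑ c ∈ Finset.range (n + 1),
      (n.choose c : ℝ) * p ^ c * (1 - p) ^ (n - c) *
        (((n - c).choose K : ℝ) / (n.choose K)) = (1 - p) ^ K := by
    have step : ∀ c ∈ Finset.range (n + 1),
        (n.choose c : ℝ) * p ^ c * (1 - p) ^ (n - c) *
          (((n - c).choose K : ℝ) / (n.choose K))
        = ((n - K).choose c : ℝ) * p ^ c * (1 - p) ^ (n - c) := by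
      intro c hcmem
      have hc : c ≤ n := by simpa [Nat.lt_succ_iff] using Finset.mem_range.mp hcmem
      have hk := key_choose n K c hKn hc
      have hkR : (n.choose c : ℝ) * ((n - c).choose K : ℝ)
          = (n.choose K : ℝ) * ((n - K).choose c : ℝ) := by exact_mod_cast hk
      field_simp
      linear_combination p ^ c * (1 - p) ^ (n - c) * hkR
    rw [Finset.sum_congr rfl step]
    rw [← Finset.sum_subset (Finset.range_subset_range.mpr (by omega : n - K + 1 ≤ n + 1))]
    · have : ∀ c ∈ Finset.range (n - K + 1),
          ((n - K).choose c : ℝ) * p ^ c * (1 - p) ^ (n - c)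
          = (1 - p) ^ K * (((n - K).choose c : ℝ) * p ^ c * (1 - p) ^ (n - K - c)) := by
        intro c hcmem
        have hc : c ≤ n - K := by simpa [Nat.lt_succ_iff] using Finset.mem_range.mp hcmem
        have : n - c = K + (n - K - c) := by omega
        rw [this, pow_add]; ring
      rw [Finset.sum_congr rfl this, ← Finset.mul_sum]
      have := add_pow p (1 - p) (n - K)
      simp only [add_sub_cancel, one_pow] at this
      rw [show ∑ c ∈ Finset.range (n - K + 1),
          ((n - K).choose c : ℝ) * p ^ c * (1 - p) ^ (n - K - c)
          = ∑ c ∈ Finset.range (n - K + 1),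
          p ^ c * (1 - p) ^ (n - K - c) * ((n - K).choose c : ℝ) from
        Finset.sum_congr rfl (fun c _ => by ring), ← this, mul_one]
    · intro c hc1 hc2
      simp only [Finset.mem_range, Nat.lt_succ_iff] at hc1 hc2
      rw [Nat.choose_eq_zero_of_lt (by omega)]
      simp
  simp only [mul_sub, mul_one]
  rw [Finset.sum_sub_distrib, hsum1, hsum2]
end
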